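/- For the flag pole W = z/√λ and any nonzero U = Σ_{i=1}^n (a_i u_i + b_i v_i) ∈ 𝔥, the flag curvature of the flag Π = span{U, W} with pole W equals K(Π, W) = g_W(R̄(U,W)W, U) / (g_W(W,W) g_W(U,U) − g_W(U,W)²) = (λ/4) · (Σ_{i=1}^n (a_i² + b_i²)/σ_i) / (Σ_{i=1}^n (a_i² + b_i²) σ_i). -/

import Mathlib

set_option maxHeartbeats 1000000

lemma aux1 (P Q R C E : ℝ) (hP : 0 < P) :
    deriv (fun t : ℝ => (Real.sqrt (P + 2*Q*t + R*t^2) + (C + E*t))^2) 0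
      = 2*(Real.sqrt P + C)*(Q/Real.sqrt P + E) := by
  have hP0 : P + 2*Q*0 + R*0^2 = P := by ring
  have hs : Real.sqrt P ≠ 0 := (Real.sqrt_pos.mpr hP).ne'
  have h1 : HasDerivAt (fun t : ℝ => P + 2*Q*t + R*t^2) (2*Q) 0 := by
    have ha : HasDerivAt (fun t : ℝ => 2*Q*t) (2*Q) 0 := by
      simpa using (hasDerivAt_id (0:ℝ)).const_mul (2*Q)
    have hb : HasDerivAt (fun t : ℝ => R*t^2) 0 0 := by
      simpa using (hasDerivAt_pow 2 (0:ℝ)).const_mul R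
    exact ((ha.const_add P).add hb).congr_deriv (add_zero _)
  have hsq : HasDerivAt (fun t : ℝ => Real.sqrt (P + 2*Q*t + R*t^2)) (Q / Real.sqrt P) 0 := by
    have h := (Real.hasDerivAt_sqrt (by rw [hP0]; exact hP.ne')).comp 0 h1
    rw [hP0] at h
    exact h.congr_deriv (by rw [div_mul_eq_mul_div, one_mul, mul_div_mul_left _ _ two_ne_zero])
  have h3 : HasDerivAt (fun t : ℝ => C + E*t) E 0 := by
    simpa using ((hasDerivAt_id (0:ℝ)).const_mul E).const_add C
  have h4 := (hsq.add h3).pow 2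
  exact h4.deriv.trans (by norm_num [hP0])

lemma aux2 (al be ga de ep e xx : ℝ) :
    deriv (fun s : ℝ => 2*(Real.sqrt (1 + 2*al*s + be*s^2) + (xx + ga*s))
      *((de + ep*s)/Real.sqrt (1 + 2*al*s + be*s^2) + e)) 0
    = 2*((al+ga)*(de+e) + (1+xx)*(ep - de*al)) := by
  have hP0 : (1:ℝ) + 2*al*0 + be*0^2 = 1 := by ring
  have h1 : HasDerivAt (fun s : ℝ => 1 + 2*al*s + be*s^2) (2*al) 0 := by
    have ha : HasDerivAt (fun s : ℝ => 2*al*s) (2*al) 0 := by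
      simpa using (hasDerivAt_id (0:ℝ)).const_mul (2*al)
    have hb : HasDerivAt (fun s : ℝ => be*s^2) 0 0 := by
      simpa using (hasDerivAt_pow 2 (0:ℝ)).const_mul be
    exact ((ha.const_add 1).add hb).congr_deriv (add_zero _)
  have hsq : HasDerivAt (fun s : ℝ => Real.sqrt (1 + 2*al*s + be*s^2)) al 0 := by
    have h := (Real.hasDerivAt_sqrt (by rw [hP0]; norm_num)).comp 0 h1
    rw [hP0] at h
    exact h.congr_deriv (by rw [Real.sqrt_one]; ring)
  have hlin : HasDerivAt (fun s : ℝ => xx + ga*s) ga 0 := by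
    simpa using ((hasDerivAt_id (0:ℝ)).const_mul ga).const_add xx
  have hnum : HasDerivAt (fun s : ℝ => de + ep*s) ep 0 := by
    simpa using ((hasDerivAt_id (0:ℝ)).const_mul ep).const_add de
  have hf1 : HasDerivAt (fun s : ℝ => 2*(Real.sqrt (1 + 2*al*s + be*s^2) + (xx + ga*s)))
      (2*(al + ga)) 0 := (hsq.add hlin).const_mul 2
  have hdiv : HasDerivAt (fun s : ℝ => (de + ep*s)/Real.sqrt (1 + 2*al*s + be*s^2))
      (ep - de*al) 0 := by
    have h := hnum.div hsq (by rw [hP0, Real.sqrt_one]; norm_num)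
    exact h.congr_deriv (by rw [hP0, Real.sqrt_one]; ring)
  have hf2 : HasDerivAt (fun s : ℝ => (de + ep*s)/Real.sqrt (1 + 2*al*s + be*s^2) + e)
      (ep - de*al) 0 := hdiv.add_const e
  have h := hf1.mul hf2
  exact h.deriv.trans (by norm_num [hP0, Real.sqrt_one]; ring)
lemma aux_main (al be ga de ep r e xx : ℝ) :
    deriv (fun s : ℝ => deriv (fun t : ℝ =>
      (Real.sqrt ((1 + 2*al*s + be*s^2) + 2*(de + ep*s)*t + r*t^2)
        + ((xx + ga*s) + e*t))^2) 0) 0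
    = 2*((al+ga)*(de+e) + (1+xx)*(ep - de*al)) := by
  have hc : ContinuousAt (fun s : ℝ => 1 + 2*al*s + be*s^2) 0 := by fun_prop
  have hpev : ∀ᶠ s in nhds (0:ℝ), 0 < 1 + 2*al*s + be*s^2 := by
    have h0 : (0:ℝ) < 1 + 2*al*0 + be*0^2 := by norm_num
    exact hc.eventually (eventually_gt_nhds h0)
  have heq : (fun s : ℝ => deriv (fun t : ℝ =>
      (Real.sqrt ((1 + 2*al*s + be*s^2) + 2*(de + ep*s)*t + r*t^2)
        + ((xx + ga*s) + e*t))^2) 0)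
      =ᶠ[nhds 0] (fun s : ℝ => 2*(Real.sqrt (1 + 2*al*s + be*s^2) + (xx + ga*s))
      *((de + ep*s)/Real.sqrt (1 + 2*al*s + be*s^2) + e)) :=
    hpev.mono fun s hs => aux1 (1 + 2*al*s + be*s^2) (de + ep*s) r (xx + ga*s) e hs
  rw [heq.deriv_eq]
  exact aux2 al be ga de ep e xx
theorem stmt_13
    {H : Type*} [AddCommGroup H] [Module ℝ H]
    (n : ℕ) (hn : 1 ≤ n)
    (u v : Fin n → H) (z : H)
    (b : Module.Basis (Fin n ⊕ Fin n ⊕ Unit) ℝ H)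
    (hbu : ∀ i, b (Sum.inl i) = u i)
    (hbv : ∀ i, b (Sum.inr (Sum.inl i)) = v i)
    (hbz : b (Sum.inr (Sum.inr ())) = z)
    (bracket : H →ₗ[ℝ] H →ₗ[ℝ] H)
    (hbskew : ∀ X Y : H, bracket X Y = - bracket Y X)
    (hbuv : ∀ i j, bracket (u i) (v j) = if i = j then z else 0)
    (hbuu : ∀ i j, bracket (u i) (u j) = 0)
    (hbvv : ∀ i j, bracket (v i) (v j) = 0)
    (hbuz : ∀ i, bracket (u i) z = 0)
    (hbvz : ∀ i, bracket (v i) z = 0)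
    (lam : ℝ) (hlam : 0 < lam)
    (sigma : Fin n → ℝ) (hsigma : ∀ i, 0 < sigma i)
    (ip : H →ₗ[ℝ] H →ₗ[ℝ] ℝ)
    (hipsymm : ∀ X Y : H, ip X Y = ip Y X)
    (hippos : ∀ X : H, X ≠ 0 → 0 < ip X X)
    (hipuu : ∀ i j, ip (u i) (u j) = if i = j then sigma i else 0)
    (hipvv : ∀ i j, ip (v i) (v j) = if i = j then sigma i else 0)
    (hipuv : ∀ i j, ip (u i) (v j) = 0)
    (hipuz : ∀ i, ip (u i) z = 0)
    (hipvz : ∀ i, ip (v i) z = 0)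
    (hipzz : ip z z = lam)
    (xi : ℝ) (hxi0 : 0 < xi) (hxi1 : xi < 1)
    (Q : H) (hQ : Q = (xi / Real.sqrt lam) • z)
    (F : H → ℝ) (hF : ∀ y : H, F y = Real.sqrt (ip y y) + ip Q y)
    (W : H) (hW : W = (1 / Real.sqrt lam) • z)
    (gW : H → H → ℝ)
    (hgW : ∀ X Y : H, gW X Y =
      deriv (fun s : ℝ => deriv (fun t : ℝ => (F (W + s • X + t • Y)) ^ 2) 0) 0 / 2)
    (nablaW : H →ₗ[ℝ] H →ₗ[ℝ] H)
    (hKoszulW : ∀ U V X : H, 2 * gW (nablaW U V) X =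
      gW (bracket U V) X - gW (bracket V X) U + gW (bracket X U) V)
    (RW : H → H → H → H)
    (hRW : ∀ U V X : H, RW U V X =
      nablaW U (nablaW V X) - nablaW V (nablaW U X) - nablaW (bracket U V) X)
    :
    ∀ a c : Fin n → ℝ,
      (∑ i, (a i • u i + c i • v i)) ≠ 0 →
      gW (RW (∑ i, (a i • u i + c i • v i)) W W) (∑ i, (a i • u i + c i • v i)) /
        (gW W W * gW (∑ i, (a i • u i + c i • v i)) (∑ i, (a i • u i + c i • v i)) -
          (gW (∑ i, (a i • u i + c i • v i)) W) ^ 2) =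
      (lam / 4) * ((∑ i, (a i ^ 2 + c i ^ 2) / sigma i) / (∑ i, (a i ^ 2 + c i ^ 2) * sigma i)) := by

  intro a c hU
  have hslpos : 0 < Real.sqrt lam := Real.sqrt_pos.mpr hlam
  have hsl2 : Real.sqrt lam * Real.sqrt lam = lam := Real.mul_self_sqrt hlam.le
  have hipWW : ip W W = 1 := by
    rw [hW]
    simp only [map_smul, LinearMap.smul_apply, smul_eq_mul, hipzz]
    field_simp
    rw [Real.sq_sqrt hlam.le]
  have hQW : Q = xi • W := by
    rw [hQ, hW, smul_smul]
    congr 1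
    ring
  have hg : ∀ X Y : H, gW X Y = (1+xi) * (ip X Y + xi * (ip W X) * (ip W Y)) := by
    intro X Y
    rw [hgW]
    have hrw : ∀ s t : ℝ, F (W + s • X + t • Y) ^ 2 =
        (Real.sqrt ((1 + 2*(ip W X)*s + (ip X X)*s^2) + 2*(ip W Y + (ip X Y)*s)*t + (ip Y Y)*t^2)
          + ((xi + (xi * ip W X)*s) + (xi * ip W Y)*t))^2 := by
      intro s t
      rw [hF]
      have e1 : ip (W + s • X + t • Y) (W + s • X + t • Y)
          = (1 + 2*(ip W X)*s + (ip X X)*s^2) + 2*(ip W Y + (ip X Y)*s)*t + (ip Y Y)*t^2 := by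
        simp only [map_add, map_smul, LinearMap.add_apply, LinearMap.smul_apply, smul_eq_mul]
        rw [hipsymm X W, hipsymm Y W, hipsymm Y X, hipWW]
        ring
      have e2 : ip Q (W + s • X + t • Y) = (xi + (xi * ip W X)*s) + (xi * ip W Y)*t := by
        rw [hQW]
        simp only [map_add, map_smul, LinearMap.add_apply, LinearMap.smul_apply, smul_eq_mul,
          hipWW]
        ring
      rw [e1, e2]
    simp only [hrw]
    rw [aux_main (ip W X) (ip X X) (xi * ip W X) (ip W Y) (ip X Y) (ip Y Y) (xi * ip W Y) xi]
    ring
  -- ====== Step B: algebra ======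
  set U : H := ∑ i, (a i • u i + c i • v i) with hUdef
  have hxne : (1:ℝ) + xi ≠ 0 := by positivity
  have hipzu : ∀ i, ip z (u i) = 0 := fun i => by rw [hipsymm]; exact hipuz i
  have hipzv : ∀ i, ip z (v i) = 0 := fun i => by rw [hipsymm]; exact hipvz i
  have hipvu : ∀ i j, ip (v i) (u j) = 0 := fun i j => by rw [hipsymm]; exact hipuv j i
  have hipWu : ∀ i, ip W (u i) = 0 := by
    intro i; rw [hW]
    simp [map_smul, hipzu i]
  have hipWv : ∀ i, ip W (v i) = 0 := by
    intro i; rw [hW]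
    simp [map_smul, hipzv i]
  have hipWz : ip W z = Real.sqrt lam := by
    rw [hW]
    simp only [map_smul, LinearMap.smul_apply, smul_eq_mul, hipzz]
    field_simp
    rw [Real.sq_sqrt hlam.le]
  have hipUu : ∀ k, ip U (u k) = a k * sigma k := by
    intro k
    rw [hUdef]
    simp [map_sum, map_add, map_smul, LinearMap.sum_apply, LinearMap.add_apply,
      LinearMap.smul_apply, smul_eq_mul, hipuu, hipvu, Finset.sum_ite_eq,
      Finset.sum_ite_eq', mul_ite, mul_zero]
  have hipUv : ∀ k, ip U (v k) = c k * sigma k := by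
    intro k
    rw [hUdef]
    simp [map_sum, map_add, map_smul, LinearMap.sum_apply, LinearMap.add_apply,
      LinearMap.smul_apply, smul_eq_mul, hipvv, hipuv, Finset.sum_ite_eq,
      Finset.sum_ite_eq', mul_ite, mul_zero]
  have hipUz : ip U z = 0 := by
    rw [hUdef]
    simp [map_sum, map_add, map_smul, LinearMap.sum_apply, LinearMap.add_apply,
      LinearMap.smul_apply, smul_eq_mul, hipuz, hipvz]
  have hipWU : ip W U = 0 := by
    rw [hUdef]
    simp [map_sum, map_add, map_smul, smul_eq_mul, hipWu, hipWv]
  have hipUU : ip U U = ∑ i, (a i ^ 2 + c i ^ 2) * sigma i := by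
    nth_rewrite 2 [hUdef]
    rw [map_sum]
    refine Finset.sum_congr rfl fun i _ => ?_
    simp only [map_add, map_smul, smul_eq_mul, hipUu, hipUv]
    ring
  -- gW helpers
  have hg0l : ∀ X : H, gW 0 X = 0 := fun X => by simp [hg]
  have hg_smul : ∀ (r : ℝ) (X Y : H), gW (r • X) Y = r * gW X Y := fun r X Y => by
    simp only [hg, map_smul, LinearMap.smul_apply, smul_eq_mul]; ring
  have hg_neg : ∀ X Y : H, gW (-X) Y = -(gW X Y) := fun X Y => by
    simp only [hg, map_neg, LinearMap.neg_apply]; ring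
  have hgzW : gW z W = (1+xi)^2 * Real.sqrt lam := by
    rw [hg, hipsymm z W, hipWz, hipWW]; ring
  have hipu_of_gW : ∀ (D : H) k, gW D (u k) = (1+xi) * ip D (u k) := fun D k => by
    rw [hg, hipWu]; ring
  have hipv_of_gW : ∀ (D : H) k, gW D (v k) = (1+xi) * ip D (v k) := fun D k => by
    rw [hg, hipWv]; ring
  have hipz_of_gW : ∀ D : H, gW D z = (1+xi)^2 * ip D z := by
    intro D
    rw [hg]
    have h1 : ip W D = 1/Real.sqrt lam * ip D z := by
      rw [hipsymm W D, hW]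
      simp [map_smul]
    rw [h1, hipWz]
    field_simp
  -- bracket lemmas
  have hbzz : bracket z z = 0 := by
    have h := hbskew z z
    have h3 : (2:ℝ) • bracket z z = 0 := by
      rw [two_smul]
      nth_rewrite 2 [h]
      simp
    simpa using (smul_eq_zero.mp h3).resolve_left (by norm_num)
  have hbz0 : (bracket z : H →ₗ[ℝ] H) = 0 := by
    refine b.ext fun i => ?_
    rcases i with i | i | _
    · rw [hbu]; simp [hbskew z (u i), hbuz]
    · rw [hbv]; simp [hbskew z (v i), hbvz]
    · rw [hbz]; simp [hbzz]
  have hbrzX : ∀ X : H, bracket z X = 0 := fun X => by rw [hbz0]; rfl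
  have hbrW : ∀ X : H, bracket W X = 0 := by
    intro X
    rw [hW, map_smul]
    simp [hbz0]
  have hbrW' : ∀ X : H, bracket X W = 0 := fun X => by rw [hbskew, hbrW, neg_zero]
  have hbrkuU : ∀ k, bracket (u k) U = c k • z := by
    intro k
    rw [hUdef, map_sum]
    simp [map_add, map_smul, hbuu, hbuv, smul_ite, Finset.sum_ite_eq, Finset.sum_ite_eq']
  have hbrkvU : ∀ k, bracket (v k) U = (-(a k)) • z := by
    intro k
    rw [hUdef, map_sum]
    have h1 : ∀ i, bracket (v k) (u i) = -(if i = k then z else 0) := fun i => by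
      rw [hbskew, hbuv]
    simp [map_add, map_smul, hbvv, h1, smul_ite, smul_neg, neg_smul,
      Finset.sum_ite_eq, Finset.sum_ite_eq']
  -- nondegeneracy
  have hD0 : ∀ D : H, ip D z = 0 → (∀ k, ip D (u k) = 0) → (∀ k, ip D (v k) = 0) → D = 0 := by
    intro D h1 h2 h3
    by_contra hne
    have hp := hippos D hne
    have hz0 : ip D D = 0 := by
      have hr : ip D D = ip D (∑ i, b.repr D i • b i) := by rw [b.sum_repr]
      rw [hr, map_sum]
      refine Finset.sum_eq_zero fun i _ => ?_
      rcases i with k | k | _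
      · rw [hbu]; simp [map_smul, h2 k]
      · rw [hbv]; simp [map_smul, h3 k]
      · rw [hbz]; simp [map_smul, h1]
    linarith
  -- N = nabla_U W
  set N : H := nablaW U W with hNdef
  set nu : ℝ := (1+xi) * Real.sqrt lam / 2 with hnu
  have hNz : ip N z = 0 := by
    have h := hKoszulW U W z
    rw [hbrW' U, hbrW z, hbrzX U] at h
    simp only [hg0l] at h
    have h2 := hipz_of_gW N
    have h3 : (1+xi)^2 * ip N z = 0 := by rw [← h2]; linarith
    exact (mul_eq_zero.mp h3).resolve_left (by positivity)
  have hNu : ∀ k, ip N (u k) = nu * c k := by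
    intro k
    have h := hKoszulW U W (u k)
    rw [hbrW' U, hbrW (u k), hbrkuU k, hg_smul, hgzW, hipu_of_gW] at h
    simp only [hg0l] at h
    have h5 : (1+xi) * (2 * ip N (u k)) = (1+xi) * (2 * (nu * c k)) := by
      rw [hnu]; ring_nf; ring_nf at h; linarith
    have h6 := mul_left_cancel₀ hxne h5
    linarith
  have hNv : ∀ k, ip N (v k) = -(nu * a k) := by
    intro k
    have h := hKoszulW U W (v k)
    rw [hbrW' U, hbrW (v k), hbrkvU k, hg_smul, hgzW, hipv_of_gW] at h
    simp only [hg0l] at h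
    have h5 : (1+xi) * (2 * ip N (v k)) = (1+xi) * (2 * (-(nu * a k))) := by
      rw [hnu]; ring_nf; ring_nf at h; linarith
    have h6 := mul_left_cancel₀ hxne h5
    linarith
  -- explicit formula for N
  set Ev : H := ∑ j, ((nu * c j / sigma j) • u j + (-(nu * a j) / sigma j) • v j) with hEvdef
  have hEu : ∀ k, ip Ev (u k) = nu * c k := by
    intro k
    rw [hEvdef]
    simp [map_sum, map_add, map_smul, LinearMap.sum_apply, LinearMap.add_apply,
      LinearMap.smul_apply, smul_eq_mul, hipuu, hipvu, Finset.sum_ite_eq,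
      Finset.sum_ite_eq', mul_ite, mul_zero]
    exact div_mul_cancel₀ _ (hsigma k).ne'
  have hEvv : ∀ k, ip Ev (v k) = -(nu * a k) := by
    intro k
    rw [hEvdef]
    simp [map_sum, map_add, map_smul, LinearMap.sum_apply, LinearMap.add_apply,
      LinearMap.smul_apply, smul_eq_mul, hipvv, hipuv, Finset.sum_ite_eq,
      Finset.sum_ite_eq', mul_ite, mul_zero]
    exact div_mul_cancel₀ _ (hsigma k).ne'
  have hEz : ip Ev z = 0 := by
    rw [hEvdef]
    simp [map_sum, map_add, map_smul, hipuz, hipvz]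
  have hNE : N = Ev := by
    have h := hD0 (N - Ev) ?_ ?_ ?_
    · exact sub_eq_zero.mp h
    · simp [map_sub, LinearMap.sub_apply, hNz, hEz]
    · intro k; simp [map_sub, LinearMap.sub_apply, hNu k, hEu k]
    · intro k; simp [map_sub, LinearMap.sub_apply, hNv k, hEvv k]
  have hbrkuE : ∀ k, bracket (u k) Ev = (-(nu * a k) / sigma k) • z := by
    intro k
    rw [hEvdef, map_sum]
    simp [map_add, map_smul, hbuu, hbuv, smul_ite, smul_smul,
      Finset.sum_ite_eq, Finset.sum_ite_eq']
  have hbrkvE : ∀ k, bracket (v k) Ev = (-(nu * c k / sigma k)) • z := by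
    intro k
    rw [hEvdef, map_sum]
    have h1 : ∀ i, bracket (v k) (u i) = -(if i = k then z else 0) := fun i => by
      rw [hbskew, hbuv]
    simp [map_add, map_smul, hbvv, h1, smul_ite, smul_neg, neg_smul, smul_smul,
      Finset.sum_ite_eq, Finset.sum_ite_eq']
  have hEu' : ∀ k, bracket Ev (u k) = (nu * a k / sigma k) • z := by
    intro k
    rw [hbskew, hbrkuE]
    simp [neg_div]
  have hEv' : ∀ k, bracket Ev (v k) = (nu * c k / sigma k) • z := by
    intro k
    rw [hbskew, hbrkvE]
    simp
  have hbrEU : bracket Ev U = (∑ j, nu * (a j ^ 2 + c j ^ 2) / sigma j) • z := by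
    rw [hUdef, map_sum, Finset.sum_smul]
    refine Finset.sum_congr rfl fun j _ => ?_
    simp only [map_add, map_smul, hEu' j, hEv' j, smul_smul, ← add_smul]
    congr 1
    have hs := (hsigma j).ne'
    field_simp
  have hbNU : bracket N U = (∑ j, nu * (a j ^ 2 + c j ^ 2) / sigma j) • z := by
    rw [hNE]; exact hbrEU
  have hMU : 2 * gW (nablaW W N) U
      = -((∑ j, nu * (a j ^ 2 + c j ^ 2) / sigma j) * ((1+xi)^2 * Real.sqrt lam)) := by
    have h := hKoszulW W N U
    rw [hbrW N, hbrW' U, hbNU, hg_smul, hgzW] at h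
    simp only [hg0l] at h
    linarith
  have hWW0 : nablaW W W = 0 := by
    have hgall : ∀ X : H, gW (nablaW W W) X = 0 := by
      intro X
      have h := hKoszulW W W X
      rw [hbrW W, hbrW X, hbrW' X] at h
      simp only [hg0l] at h
      linarith
    refine hD0 _ ?_ ?_ ?_
    · have h := hgall z
      rw [hipz_of_gW] at h
      exact (mul_eq_zero.mp h).resolve_left (by positivity)
    · intro k
      have h := hgall (u k)
      rw [hipu_of_gW] at h
      exact (mul_eq_zero.mp h).resolve_left hxne
    · intro k
      have h := hgall (v k)
      rw [hipv_of_gW] at h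
      exact (mul_eq_zero.mp h).resolve_left hxne
  have hRval : RW U W W = -(nablaW W N) := by
    rw [hRW, hWW0, hbrW' U]
    simp [hNdef]
  have hgRU : gW (RW U W W) U
      = (∑ j, nu * (a j ^ 2 + c j ^ 2) / sigma j) * ((1+xi)^2 * Real.sqrt lam) / 2 := by
    rw [hRval, hg_neg]
    linarith
  have hgWWv : gW W W = (1+xi)^2 := by rw [hg, hipWW]; ring
  have hgUU : gW U U = (1+xi) * ∑ i, (a i ^ 2 + c i ^ 2) * sigma i := by
    rw [hg, hipUU, hipWU]; ring
  have hgUW : gW U W = 0 := by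
    rw [hg, hipsymm U W, hipWU, hipWW]
    ring
  have hS2 : 0 < ∑ i, (a i ^ 2 + c i ^ 2) * sigma i := by
    have hnn : ∀ i ∈ Finset.univ, (0:ℝ) ≤ (a i ^ 2 + c i ^ 2) * sigma i := fun i _ => by
      have := (hsigma i).le; positivity
    rcases (Finset.sum_nonneg hnn).lt_or_eq with h | h
    · exact h
    · exfalso
      apply hU
      have hall := (Finset.sum_eq_zero_iff_of_nonneg hnn).mp h.symm
      rw [hUdef]
      refine Finset.sum_eq_zero fun i _ => ?_
      have hi := hall i (Finset.mem_univ i)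
      have hsum0 : a i ^ 2 + c i ^ 2 = 0 := by
        rcases mul_eq_zero.mp hi with h' | h'
        · exact h'
        · exact absurd h' (hsigma i).ne'
      have ha2 : a i ^ 2 = 0 := le_antisymm (by nlinarith [sq_nonneg (c i)]) (sq_nonneg _)
      have hc2 : c i ^ 2 = 0 := le_antisymm (by nlinarith [sq_nonneg (a i)]) (sq_nonneg _)
      have ha0 : a i = 0 := by
        have := sq_nonneg (a i); nlinarith [sq_abs (a i), abs_nonneg (a i)]
      have hc0 : c i = 0 := by
        have := sq_nonneg (c i); nlinarith [sq_abs (c i), abs_nonneg (c i)]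
      rw [ha0, hc0]
      simp
  have hnumer : (∑ j, nu * (a j ^ 2 + c j ^ 2) / sigma j)
      = nu * ∑ j, (a j ^ 2 + c j ^ 2) / sigma j := by
    rw [Finset.mul_sum]
    exact Finset.sum_congr rfl fun j _ => by rw [mul_div_assoc]
  rw [hgRU, hgWWv, hgUU, hgUW, hnumer]
  have hnum2 : nu * (∑ j, (a j ^ 2 + c j ^ 2) / sigma j) * ((1+xi)^2 * Real.sqrt lam) / 2
      = (1+xi)^3 * lam * (∑ j, (a j ^ 2 + c j ^ 2) / sigma j) / 4 := by
    rw [hnu]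
    linear_combination ((1+xi)^3 * (∑ j, (a j ^ 2 + c j ^ 2) / sigma j) / 4) * hsl2
  rw [hnum2]
  have hden : (1+xi)^2 * ((1+xi) * ∑ i, (a i ^ 2 + c i ^ 2) * sigma i) - 0^2
      = (1+xi)^3 * ∑ i, (a i ^ 2 + c i ^ 2) * sigma i := by ring
  rw [hden]
  field_simp [hS2.ne', hxne]
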